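/- Let A = A₀ ⊕ A₁ be a ℤ/2-graded commutative ring, X a set, P : X² → A₀ symmetric, G : X² → A₀, S : X² → A₀ antisymmetric, F : X² → A₁, and in addition λ_I, ω_I : X → A₀ and ω̂_I : X → A₁ for indices I in some index set. Define Π^{(n+2)} and Π_F^{(n+2)} by the linear chain formulas, and set Π_I^{(n+2)}(r;t_1,…,t_n;s) := λ_I(r)·G^{n+1}(r,t_1,…,t_n,s) + ω_I(r)·Π^{(n+2)}(r;t_1,…,t_n;s) − ω̂_I(r)·Π_F^{(n+2)}(r;t_1,…,t_n;s), and Π_{IJ}^{(n+2)}(r;t_1,…,t_n;s) := Π_I^{(n+2)}(r;t_1,…,t_n;s)·ω_J(s) + (−1)^n ω_I(r)·Π_J^{(n+2)}(s;t_n,…,t_1;r) − ω_I(r)·Π^{(n+2)}(r;t_1,…,t_n;s)·ω_J(s) + ω̂_I(r)·S^{n+1}(r,t_1,…,t_n,s)·ω̂_J(s). Then Π_{IJ}^{(n+2)}(r;t_1,…,t_n;s) = (−1)^n Π_{JI}^{(n+2)}(s;t_n,…,t_1;r). -/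

import Mathlib

/-- Ordered path product `f(x₀,x₁) f(x₁,x₂) ⋯ f(x_{k−1},x_k)` starting at `x`
through the list of subsequent points; the empty product is `1`. -/
def pathProd {A X : Type*} [Monoid A] (f : X → X → A) : X → List X → A
  | _, [] => 1
  | x, y :: l => f x y * pathProd f y l

/-- The fundamental linear chain block
`Π^{(n+2)}(r;t₁,…,tₙ;s) = ∑_{α=0}^{n} (−1)^α G^α(t_α,…,t₁,r) P(t_α,t_{α+1}) G^{n−α}(t_{α+1},…,tₙ,s)
 − ∑_{α=0}^{n−1} ∑_{β=0}^{n−1−α} (−1)^α G^α(t_α,…,t₁,r) F(t_{α+1},t_α)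
   S^β(t_{α+1},…,t_{α+β+1}) F(t_{α+β+1},t_{α+β+2}) G^{n−1−α−β}(t_{α+β+2},…,tₙ,s)`,
with `t₀ := r`, `t_{n+1} := s`. -/
def PiBlock {A X : Type*} [Ring A] (P G S F : X → X → A)
    (r : X) (ts : List X) (s : X) : A :=
  let n := ts.length
  let pt : ℕ → X := fun i => (r :: (ts ++ [s])).getD i s
  (∑ α ∈ Finset.range (n + 1),
      (-1 : A) ^ α * pathProd G (pt α) ((List.range α).reverse.map pt)
        * P (pt α) (pt (α + 1))
        * pathProd G (pt (α + 1)) ((List.range' (α + 2) (n - α)).map pt))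
  - (∑ α ∈ Finset.range n, ∑ β ∈ Finset.range (n - α),
      (-1 : A) ^ α * pathProd G (pt α) ((List.range α).reverse.map pt)
        * F (pt (α + 1)) (pt α)
        * pathProd S (pt (α + 1)) ((List.range' (α + 2) β).map pt)
        * F (pt (α + β + 1)) (pt (α + β + 2))
        * pathProd G (pt (α + β + 2)) ((List.range' (α + β + 3) (n - 1 - α - β)).map pt))

/-- The fermionic linear chain block
`Π_F^{(n+2)}(r;t₁,…,tₙ;s) = ∑_{α=0}^{n} S^α(r,t₁,…,t_α) F(t_α,t_{α+1}) G^{n−α}(t_{α+1},…,tₙ,s)`,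
with `t₀ := r`, `t_{n+1} := s`. -/
def PiFBlock {A X : Type*} [Ring A] (S F G : X → X → A)
    (r : X) (ts : List X) (s : X) : A :=
  let n := ts.length
  let pt : ℕ → X := fun i => (r :: (ts ++ [s])).getD i s
  ∑ α ∈ Finset.range (n + 1),
    pathProd S (pt 0) ((List.range' 1 α).map pt)
      * F (pt α) (pt (α + 1))
      * pathProd G (pt (α + 1)) ((List.range' (α + 2) (n - α)).map pt)

/-- The once-monodromy linear chain block
`Π_I^{(n+2)}(r;t₁,…,tₙ;s) = λ_I(r) G^{n+1}(r,t₁,…,tₙ,s) + ω_I(r) Π^{(n+2)}(r;t₁,…,tₙ;s)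
 − ω̂_I(r) Π_F^{(n+2)}(r;t₁,…,tₙ;s)`. -/
def PiI {A X ι : Type*} [Ring A] (P G S F : X → X → A)
    (lam om : ι → X → A) (omh : ι → X → A)
    (I : ι) (r : X) (ts : List X) (s : X) : A :=
  lam I r * pathProd G r (ts ++ [s])
    + om I r * PiBlock P G S F r ts s
    - omh I r * PiFBlock S F G r ts s

/-- The twice-monodromy linear chain block `Π_{IJ}^{(n+2)}(r;t₁,…,tₙ;s)`. -/
def PiIJ {A X ι : Type*} [Ring A] (P G S F : X → X → A)
    (lam om : ι → X → A) (omh : ι → X → A)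
    (I J : ι) (r : X) (ts : List X) (s : X) : A :=
  PiI P G S F lam om omh I r ts s * om J s
    + (-1 : A) ^ ts.length * (om I r * PiI P G S F lam om omh J s ts.reverse r)
    - om I r * PiBlock P G S F r ts s * om J s
    + omh I r * pathProd S r (ts ++ [s]) * omh J s

/-!
The reflection `tᵢ ↦ t_{n+1-i}` (with `t₀ = r`, `t_{n+1} = s`) permutes the terms of
`Π^{(n+2)}`: the bosonic term `α` goes to the term `n - α` and the fermionic term `(α, β)` to
`(n - 1 - α - β, β)`. In each case the two `G`-chains trade places, and in a fermionic term the
`S`-chain is reversed, costing `(-1)^β` by antisymmetry, while the two odd `F`-factors are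
swapped, costing another sign. The even factors are central, so these identities are proved by
`ring` in the commutative ring `Subring.center A`. For `Π_{IJ}` the first two summands are
exchanged by the reflection because `ω` is central, and the last one is symmetric because
`S^{n+1}` reverses with the sign `(-1)^{n+1}` while the odd `ω̂_I(r)`, `ω̂_J(s)` anticommute.
-/

open Finset

section ChainReflection

variable {X : Type*}

theorem pathProd_concat {M : Type*} [Monoid M] (f : X → X → M) (x : X) (l : List X) (y : X) :
    pathProd f x (l ++ [y]) = pathProd f x l * f (l.getLastD x) y := by
  induction l generalizing x with
  | nil => simp [pathProd]
  | cons a l ih => simp only [List.cons_append, pathProd, ih, List.getLastD_cons, mul_assoc]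

theorem map_pathProd {M N H : Type*} [Monoid M] [Monoid N] [FunLike H M N] [MonoidHomClass H M N]
    (φ : H) (f : X → X → M) (x : X) (l : List X) :
    φ (pathProd f x l) = pathProd (fun a b => φ (f a b)) x l := by
  induction l generalizing x with
  | nil => exact map_one φ
  | cons a l ih => simp [pathProd, ih]

theorem pathProd_concat_of_antisymm {R : Type*} [CommRing R] {f : X → X → R}
    (hf : ∀ x y, f x y = -f y x) (x y : X) (l : List X) :
    pathProd f x (l ++ [y]) = (-1) ^ (l.length + 1) * pathProd f y (l.reverse ++ [x]) := by
  induction l generalizing x with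
  | nil => simp [pathProd, hf x y]
  | cons a l ih =>
    rw [List.cons_append, pathProd, ih, List.reverse_cons, pathProd_concat _ _ (l.reverse ++ [a]),
      List.getLastD_concat, hf x a, List.length_cons, pow_succ]
    ring

theorem pathProd_map_reverse_of_antisymm {R : Type*} [CommRing R] {f : X → X → R}
    (hf : ∀ x y, f x y = -f y x) (pt : ℕ → X) (a k : ℕ) :
    pathProd f (pt (a + k)) ((List.range' a k).map pt).reverse
      = (-1) ^ k * pathProd f (pt a) ((List.range' (a + 1) k).map pt) := by
  cases k with
  | zero => simp
  | succ k =>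
    rw [List.range'_succ, List.range'_concat, List.map_cons, List.reverse_cons, List.map_append,
      List.map_singleton, pathProd_concat_of_antisymm hf (pt a), List.length_map,
      List.length_range', ← mul_assoc, ← pow_add, Even.neg_one_pow ⟨k + 1, rfl⟩, one_mul,
      show a + 1 + 1 * k = a + (k + 1) by omega]

theorem map_range'_eq_reverse {q pt : ℕ → X} {m : ℕ} (h : ∀ i j, i + j = m → q i = pt j)
    {a b k : ℕ} (habk : a + b + k = m + 1) :
    (List.range' a k).map q = ((List.range' b k).map pt).reverse := by
  refine List.ext_getElem (by simp) fun i h₁ _ => ?_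
  simp only [List.getElem_map, List.getElem_range', List.getElem_reverse, List.length_map,
    List.length_range'] at h₁ ⊢
  exact h _ _ (by omega)

theorem pathProd_commute {M : Type*} [Monoid M] {f : X → X → M}
    (hf : ∀ x y a, f x y * a = a * f x y) (x : X) (l : List X) (a : M) :
    Commute (pathProd f x l) a := by
  induction l generalizing x with
  | nil => exact Commute.one_left a
  | cons b l ih => exact Commute.mul_left (hf x b a) (ih b)

theorem neg_one_pow_add_mul_neg_one_pow {R : Type*} [CommRing R] (a b : ℕ) :
    (-1 : R) ^ (a + b) * (-1) ^ a = (-1) ^ b := by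
  rw [pow_add, mul_right_comm, ← pow_add, Even.neg_one_pow ⟨a, rfl⟩, one_mul]

variable {A : Type*} [Ring A]

def toCenter (f : X → X → A) (hf : ∀ x y a, f x y * a = a * f x y) :
    X → X → Subring.center A :=
  fun x y => ⟨f x y, Subring.mem_center_iff.2 fun a => (hf x y a).symm⟩

theorem pathProd_concat_of_central_antisymm {S : X → X → A} (hSanti : ∀ x y, S x y = -S y x)
    (hS : ∀ x y a, S x y * a = a * S x y) (x y : X) (l : List X) :
    pathProd S x (l ++ [y]) = (-1) ^ (l.length + 1) * pathProd S y (l.reverse ++ [x]) := by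
  have h := congrArg (Subring.center A).subtype <| pathProd_concat_of_antisymm
    (f := toCenter S hS) (fun x y => Subtype.ext (hSanti x y)) x y l
  rwa [map_mul, map_pow, map_neg, map_one, map_pathProd, map_pathProd] at h

def bosonTerm (P G : X → X → A) (pt : ℕ → X) (n α : ℕ) : A :=
  (-1 : A) ^ α * pathProd G (pt α) ((List.range α).reverse.map pt) * P (pt α) (pt (α + 1))
    * pathProd G (pt (α + 1)) ((List.range' (α + 2) (n - α)).map pt)

def fermionTerm (G S F : X → X → A) (pt : ℕ → X) (n α β : ℕ) : A :=
  (-1 : A) ^ α * pathProd G (pt α) ((List.range α).reverse.map pt)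
    * F (pt (α + 1)) (pt α)
    * pathProd S (pt (α + 1)) ((List.range' (α + 2) β).map pt)
    * F (pt (α + β + 1)) (pt (α + β + 2))
    * pathProd G (pt (α + β + 2)) ((List.range' (α + β + 3) (n - 1 - α - β)).map pt)

def fermionWeight (G S : X → X → A) (pt : ℕ → X) (n α β : ℕ) : A :=
  (-1 : A) ^ α * pathProd G (pt α) ((List.range α).reverse.map pt)
    * pathProd S (pt (α + 1)) ((List.range' (α + 2) β).map pt)
    * pathProd G (pt (α + β + 2)) ((List.range' (α + β + 3) (n - 1 - α - β)).map pt)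

def chainSum (P G S F : X → X → A) (pt : ℕ → X) (n : ℕ) : A :=
  ∑ α ∈ range (n + 1), bosonTerm P G pt n α
    - ∑ α ∈ range n, ∑ β ∈ range (n - α), fermionTerm G S F pt n α β

theorem PiBlock_eq_chainSum (P G S F : X → X → A) (r : X) (ts : List X) (s : X) :
    PiBlock P G S F r ts s
      = chainSum P G S F (fun i => (r :: (ts ++ [s])).getD i s) ts.length := rfl

theorem map_bosonTerm {R : Type*} [Ring R] (φ : R →+* A) (P G : X → X → R) (pt : ℕ → X)
    (n α : ℕ) :
    φ (bosonTerm P G pt n α)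
      = bosonTerm (fun x y => φ (P x y)) (fun x y => φ (G x y)) pt n α := by
  simp [bosonTerm, map_pathProd]

theorem map_fermionWeight {R : Type*} [Ring R] (φ : R →+* A) (G S : X → X → R)
    (pt : ℕ → X) (n α β : ℕ) :
    φ (fermionWeight G S pt n α β)
      = fermionWeight (fun x y => φ (G x y)) (fun x y => φ (S x y)) pt n α β := by
  simp [fermionWeight, map_pathProd]

theorem bosonTerm_reflect {R : Type*} [CommRing R] {P G : X → X → R}
    (hP : ∀ x y, P x y = P y x) {q pt : ℕ → X} {n α α' : ℕ}
    (hq : ∀ i j, i + j = n + 1 → q i = pt j) (hα : α + α' = n) :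
    bosonTerm P G q n α' = (-1) ^ n * bosonTerm P G pt n α := by
  subst hα
  have hback : (List.range α').reverse.map q = (List.range' (α + 2) α').map pt := by
    rw [List.map_reverse, List.range_eq_range', map_range'_eq_reverse hq (b := α + 2) (by omega),
      List.reverse_reverse]
  have hfwd : (List.range' (α' + 2) (α + α' - α')).map q = (List.range α).reverse.map pt := by
    rw [Nat.add_sub_cancel, map_range'_eq_reverse hq (b := 0) (by omega), List.map_reverse,
      List.range_eq_range']
  unfold bosonTerm
  rw [hback, hfwd, hq α' (α + 1) (by omega), hq (α' + 1) α (by omega), hP,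
    Nat.add_sub_cancel_left]
  simp only [← mul_assoc]
  rw [neg_one_pow_add_mul_neg_one_pow]
  ring

theorem fermionWeight_reflect {R : Type*} [CommRing R] {G S : X → X → R}
    (hS : ∀ x y, S x y = -S y x) {q pt : ℕ → X} {n α β α' : ℕ}
    (hq : ∀ i j, i + j = n + 1 → q i = pt j) (h : α + β + α' + 1 = n) :
    fermionWeight G S q n α' β = -((-1) ^ n * fermionWeight G S pt n α β) := by
  obtain rfl : n = α + (β + α' + 1) := by omega
  have hback : (List.range α').reverse.map q = (List.range' (α + β + 3) α').map pt := by
    rw [List.map_reverse, List.range_eq_range',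
      map_range'_eq_reverse hq (b := α + β + 3) (by omega), List.reverse_reverse]
  have hmid : (List.range' (α' + 2) β).map q = ((List.range' (α + 1) β).map pt).reverse :=
    map_range'_eq_reverse hq (by omega)
  have hfwd : (List.range' (α' + β + 3) (α + (β + α' + 1) - 1 - α' - β)).map q
      = (List.range α).reverse.map pt := by
    rw [map_range'_eq_reverse hq (b := 0) (by omega), List.map_reverse, List.range_eq_range']
    congr 3
    omega
  unfold fermionWeight
  rw [hback, hmid, hfwd, hq α' (α + β + 2) (by omega), hq (α' + 1) (α + 1 + β) (by omega),
    hq (α' + β + 2) α (by omega), pathProd_map_reverse_of_antisymm hS,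
    show α + (β + α' + 1) - 1 - α - β = α' by omega, show α + 1 + 1 = α + 2 from rfl]
  simp only [← mul_assoc]
  rw [neg_one_pow_add_mul_neg_one_pow]
  ring

theorem bosonTerm_reflect_of_central {P G : X → X → A} (hPsymm : ∀ x y, P x y = P y x)
    (hP : ∀ x y a, P x y * a = a * P x y) (hG : ∀ x y a, G x y * a = a * G x y)
    {q pt : ℕ → X} {n α α' : ℕ} (hq : ∀ i j, i + j = n + 1 → q i = pt j)
    (hα : α + α' = n) :
    bosonTerm P G q n α' = (-1) ^ n * bosonTerm P G pt n α := by
  have h := congrArg (Subring.center A).subtype <| bosonTerm_reflect (G := toCenter G hG)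
    (P := toCenter P hP) (fun x y => Subtype.ext (hPsymm x y)) hq hα
  rwa [map_mul, map_pow, map_neg, map_one, map_bosonTerm, map_bosonTerm] at h

theorem fermionWeight_reflect_of_central {G S : X → X → A} (hSanti : ∀ x y, S x y = -S y x)
    (hG : ∀ x y a, G x y * a = a * G x y) (hS : ∀ x y a, S x y * a = a * S x y)
    {q pt : ℕ → X} {n α β α' : ℕ} (hq : ∀ i j, i + j = n + 1 → q i = pt j)
    (h : α + β + α' + 1 = n) :
    fermionWeight G S q n α' β = -((-1) ^ n * fermionWeight G S pt n α β) := by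
  have h := congrArg (Subring.center A).subtype <| fermionWeight_reflect (G := toCenter G hG)
    (S := toCenter S hS) (fun x y => Subtype.ext (hSanti x y)) hq h
  rwa [map_neg, map_mul, map_pow, map_neg, map_one, map_fermionWeight, map_fermionWeight] at h

theorem fermionTerm_eq_fermionWeight_mul {G S F : X → X → A}
    (hG : ∀ x y a, G x y * a = a * G x y) (hS : ∀ x y a, S x y * a = a * S x y)
    (pt : ℕ → X) (n α β : ℕ) :
    fermionTerm G S F pt n α β = fermionWeight G S pt n α β
      * (F (pt (α + 1)) (pt α) * F (pt (α + β + 1)) (pt (α + β + 2))) := by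
  have hSch := pathProd_commute hS (pt (α + 1)) ((List.range' (α + 2) β).map pt)
  have hGf := pathProd_commute hG (pt (α + β + 2))
    ((List.range' (α + β + 3) (n - 1 - α - β)).map pt)
  unfold fermionTerm fermionWeight
  simp only [mul_assoc]
  rw [← (hGf _).eq, (hSch _).symm.left_comm, (hGf _).symm.left_comm]

theorem fermionTerm_reflect {G S F : X → X → A} (hSanti : ∀ x y, S x y = -S y x)
    (hG : ∀ x y a, G x y * a = a * G x y) (hS : ∀ x y a, S x y * a = a * S x y)
    (hF : ∀ x y z w, F x y * F z w = -(F z w * F x y))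
    {q pt : ℕ → X} {n α β α' : ℕ} (hq : ∀ i j, i + j = n + 1 → q i = pt j)
    (h : α + β + α' + 1 = n) :
    fermionTerm G S F q n α' β = (-1) ^ n * fermionTerm G S F pt n α β := by
  rw [fermionTerm_eq_fermionWeight_mul hG hS, fermionTerm_eq_fermionWeight_mul hG hS,
    fermionWeight_reflect_of_central hSanti hG hS hq h, hq α' (α + β + 2) (by omega),
    hq (α' + 1) (α + β + 1) (by omega), hq (α' + β + 1) (α + 1) (by omega),
    hq (α' + β + 2) α (by omega), hF]
  noncomm_ring

theorem sum_range_sum_range_sub_comm {M : Type*} [AddCommMonoid M] (n : ℕ)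
    (f : ℕ → ℕ → M) :
    ∑ α ∈ range n, ∑ β ∈ range (n - α), f α β
      = ∑ β ∈ range n, ∑ α ∈ range (n - β), f α β :=
  sum_comm' fun α β => by simp only [mem_range]; omega

theorem chainSum_reflect {P G S F : X → X → A} (hPsymm : ∀ x y, P x y = P y x)
    (hSanti : ∀ x y, S x y = -S y x) (hP : ∀ x y a, P x y * a = a * P x y)
    (hG : ∀ x y a, G x y * a = a * G x y) (hS : ∀ x y a, S x y * a = a * S x y)
    (hF : ∀ x y z w, F x y * F z w = -(F z w * F x y))
    {q pt : ℕ → X} {n : ℕ} (hq : ∀ i j, i + j = n + 1 → q i = pt j) :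
    chainSum P G S F q n = (-1) ^ n * chainSum P G S F pt n := by
  have hboson : ∑ α ∈ range (n + 1), bosonTerm P G q n α
      = (-1) ^ n * ∑ α ∈ range (n + 1), bosonTerm P G pt n α := by
    rw [← sum_range_reflect, mul_sum]
    exact sum_congr rfl fun α hα =>
      bosonTerm_reflect_of_central hPsymm hP hG hq (by simp at hα; omega)
  have hfermion : ∑ α ∈ range n, ∑ β ∈ range (n - α), fermionTerm G S F q n α β
      = (-1) ^ n * ∑ α ∈ range n, ∑ β ∈ range (n - α), fermionTerm G S F pt n α β := by
    rw [sum_range_sum_range_sub_comm n (fermionTerm G S F q n),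
      sum_range_sum_range_sub_comm n (fermionTerm G S F pt n), mul_sum]
    refine sum_congr rfl fun β hβ => ?_
    rw [← sum_range_reflect, mul_sum]
    exact sum_congr rfl fun α hα =>
      fermionTerm_reflect hSanti hG hS hF hq (by simp at hα hβ; omega)
  rw [chainSum, chainSum, hboson, hfermion, mul_sub]

theorem getD_reverse_of_add_eq {l : List X} {i j : ℕ} (h : i + j + 1 = l.length) (d d' : X) :
    l.reverse.getD j d = l.getD i d' := by
  rw [List.getD_eq_getElem _ _ (by simp; omega), List.getD_eq_getElem _ _ (by omega),
    List.getElem_reverse]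
  congr 1
  omega

theorem PiBlock_reflect {P G S F : X → X → A} (hPsymm : ∀ x y, P x y = P y x)
    (hSanti : ∀ x y, S x y = -S y x) (hP : ∀ x y a, P x y * a = a * P x y)
    (hG : ∀ x y a, G x y * a = a * G x y) (hS : ∀ x y a, S x y * a = a * S x y)
    (hF : ∀ x y z w, F x y * F z w = -(F z w * F x y)) (r : X) (ts : List X) (s : X) :
    PiBlock P G S F r ts s = (-1) ^ ts.length * PiBlock P G S F s ts.reverse r := by
  rw [PiBlock_eq_chainSum, PiBlock_eq_chainSum, List.length_reverse]
  refine chainSum_reflect hPsymm hSanti hP hG hS hF fun i j hij => ?_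
  rw [show s :: (ts.reverse ++ [r]) = (r :: (ts ++ [s])).reverse by simp,
    getD_reverse_of_add_eq (by simp; omega)]

end ChainReflection

theorem PiIJ_reflection_general {A X ι : Type*} [Ring A] (P G S F : X → X → A)
    (lam om : ι → X → A) (omh : ι → X → A)
    (hPsymm : ∀ x y, P x y = P y x)
    (hSanti : ∀ x y, S x y = -S y x)
    (hPcentral : ∀ x y a, P x y * a = a * P x y)
    (hGcentral : ∀ x y a, G x y * a = a * G x y)
    (hScentral : ∀ x y a, S x y * a = a * S x y)
    (homcentral : ∀ I x a, om I x * a = a * om I x)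
    (hFodd : ∀ x y z w, F x y * F z w = -(F z w * F x y))
    (homhodd : ∀ I x J y, omh I x * omh J y = -(omh J y * omh I x))
    (I J : ι) (r s : X) (ts : List X) :
    PiIJ P G S F lam om omh I J r ts s
      = (-1 : A) ^ ts.length * PiIJ P G S F lam om omh J I s ts.reverse r := by
  have hblock := PiBlock_reflect hPsymm hSanti hPcentral hGcentral hScentral hFodd s ts.reverse r
  have hσ := pathProd_concat_of_central_antisymm hSanti hScentral s r ts.reverse
  rw [List.reverse_reverse, List.length_reverse] at hblock hσ
  simp only [PiIJ, List.length_reverse, List.reverse_reverse, hblock, hσ, pow_succ]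
  set c := (-1 : A) ^ ts.length
  set σ := pathProd S r (ts ++ [s])
  set x := PiI P G S F lam om omh I r ts s
  set y := PiI P G S F lam om omh J s ts.reverse r
  set p := PiBlock P G S F r ts s
  have hcc : c * c = 1 := by rw [← pow_add, Even.neg_one_pow ⟨_, rfl⟩]
  have hc : ∀ a, Commute c a := fun a => (Commute.neg_one_left a).pow_left _
  have hcσ : ∀ a, Commute (c * -1 * σ) a := fun a =>
    ((hc a).mul_left (Commute.neg_one_left a)).mul_left (pathProd_commute hScentral r _ a)
  have e1 : c * (c * (om J s * x)) = x * om J s := by rw [← mul_assoc, hcc, one_mul, homcentral]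
  have e2 : c * (y * om I r) = c * (om I r * y) := by rw [homcentral]
  have e3 : c * (om J s * (c * p) * om I r) = om I r * p * om J s := by
    rw [homcentral J s, ← homcentral I r, ← mul_assoc, (hc (om I r)).eq]
    simp only [← mul_assoc]
    rw [mul_assoc (om I r) c c, hcc, mul_one]
  have e4 : c * (omh J s * (c * -1 * σ) * omh I r) = omh I r * σ * omh J s := by
    rw [← (hcσ _).eq, mul_assoc (c * -1 * σ), homhodd J s I r]
    simp only [mul_neg, neg_mul, neg_neg, ← mul_assoc, hcc, one_mul]
    rw [(pathProd_commute hScentral r _ (omh I r)).eq]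
  rw [mul_add, mul_sub, mul_add, e1, e2, e3, e4]
  abel

/-- reflection symmetry of the doubly-indexed chain block:
`Π_{IJ}^{(n+2)}(r;t₁,…,tₙ;s) = (−1)ⁿ Π_{JI}^{(n+2)}(s;tₙ,…,t₁;r)`, in a ℤ/2-graded
commutative ring with `P, G, S, λ_I, ω_I` even (central), `P` symmetric, `S`
antisymmetric, and `F`, `ω̂_I` odd (all odd values pairwise anticommute). -/
theorem PiIJ_reflection {A X ι : Type*} [Ring A] (P G S F : X → X → A)
    (lam om : ι → X → A) (omh : ι → X → A)
    (hPsymm : ∀ x y, P x y = P y x)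
    (hSanti : ∀ x y, S x y = -S y x)
    (hPcentral : ∀ x y a, P x y * a = a * P x y)
    (hGcentral : ∀ x y a, G x y * a = a * G x y)
    (hScentral : ∀ x y a, S x y * a = a * S x y)
    (hlamcentral : ∀ I x a, lam I x * a = a * lam I x)
    (homcentral : ∀ I x a, om I x * a = a * om I x)
    (hFodd : ∀ x y z w, F x y * F z w = -(F z w * F x y))
    (homhodd : ∀ I x J y, omh I x * omh J y = -(omh J y * omh I x))
    (homhF : ∀ I x z w, omh I x * F z w = -(F z w * omh I x))
    (hFomh : ∀ z w I x, F z w * omh I x = -(omh I x * F z w))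
    (I J : ι) (r s : X) (ts : List X) :
    PiIJ P G S F lam om omh I J r ts s
      = (-1 : A) ^ ts.length * PiIJ P G S F lam om omh J I s ts.reverse r :=
  PiIJ_reflection_general P G S F lam om omh hPsymm hSanti hPcentral hGcentral hScentral homcentral
    hFodd homhodd I J r s ts
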